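/- arXiv:1912.05438 — 2 statements merged into one kernel-verified Lean document; each statement's English description precedes it below -/
import Mathlib

section
/- For all real numbers t < T, σ > 0 and δ ≥ 0, the Gaussian integral identity ∫_t^T e^{−δ(u−t)} · n(σ√(u−t)) · σ/(2√(u−t)) du = (σ/√(2δ+σ²)) · (N(√((2δ+σ²)(T−t))) − 1/2) holds. -/
open MeasureTheory Real Set Filter

/-- Standard normal cdf `N(x)`. -/
noncomputable def stdCdf (x : ℝ) : ℝ := ∫ y in Set.Iic x, Real.exp (-y ^ 2 / 2) / Real.sqrt (2 * Real.pi)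

/-- Standard normal pdf `n(x)`. -/
noncomputable def stdPdf (x : ℝ) : ℝ := Real.exp (-x ^ 2 / 2) / Real.sqrt (2 * Real.pi)

lemma integrable_stdPdf : Integrable stdPdf := by
  have h : Integrable (fun x : ℝ => Real.exp (-(1/2 : ℝ) * x ^ 2)) :=
    integrable_exp_neg_mul_sq (by norm_num)
  have := h.div_const (Real.sqrt (2 * Real.pi))
  refine this.congr (Eventually.of_forall fun x => ?_)
  unfold stdPdf
  ring_nf

lemma continuous_stdPdf : Continuous stdPdf := by
  unfold stdPdf
  fun_prop

lemma hasDerivAt_stdCdf (x : ℝ) : HasDerivAt stdCdf (stdPdf x) x := by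
  have key : ∀ y : ℝ, stdCdf y = stdCdf 0 + ∫ s in (0:ℝ)..y, stdPdf s := by
    intro y
    have := intervalIntegral.integral_Iic_sub_Iic (f := stdPdf) (μ := volume)
      (integrable_stdPdf.integrableOn) (integrable_stdPdf.integrableOn) (a := 0) (b := y)
    unfold stdCdf stdPdf at *
    linarith [this]
  have hd : HasDerivAt (fun y => stdCdf 0 + ∫ s in (0:ℝ)..y, stdPdf s) (stdPdf x) x := by
    have := (intervalIntegral.integral_hasDerivAt_right
      (f := stdPdf) (a := 0) (b := x)
      (integrable_stdPdf.intervalIntegrable)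
      (continuous_stdPdf.stronglyMeasurable.stronglyMeasurableAtFilter)
      (continuous_stdPdf.continuousAt))
    simpa using this.const_add (stdCdf 0)
  exact hd.congr_of_eventuallyEq (Eventually.of_forall key)

lemma continuous_stdCdf : Continuous stdCdf :=
  continuous_iff_continuousAt.2 fun x => (hasDerivAt_stdCdf x).continuousAt

lemma stdCdf_zero : stdCdf 0 = 1 / 2 := by
  have heven : (∫ y in Set.Iic (0:ℝ), Real.exp (-y ^ 2 / 2))
      = ∫ y in Set.Ioi (0:ℝ), Real.exp (-y ^ 2 / 2) := by
    rw [show (Set.Iic (0:ℝ)) = Set.Iic (-(0:ℝ)) by norm_num, ← integral_comp_neg_Ioi]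
    simp
  have hIoi : (∫ y in Set.Ioi (0:ℝ), Real.exp (-y ^ 2 / 2)) = Real.sqrt (2 * Real.pi) / 2 := by
    have h := integral_gaussian_Ioi (1/2 : ℝ)
    simp_rw [show ∀ y : ℝ, -(1/2:ℝ) * y ^ 2 = -y^2/2 from fun y => by ring] at h
    rw [h, show Real.pi / (1/2:ℝ) = 2 * Real.pi by ring]
  have hpos : (0:ℝ) < Real.sqrt (2 * Real.pi) := Real.sqrt_pos.2 (by positivity)
  unfold stdCdf
  rw [MeasureTheory.integral_div, heven, hIoi]
  field_simp

theorem gaussian_integral_identity (t T σ δ : ℝ) (htT : t < T) (hσ : 0 < σ) (hδ : 0 ≤ δ) :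
    ∫ u in t..T, Real.exp (-δ * (u - t)) * stdPdf (σ * Real.sqrt (u - t)) *
      (σ / (2 * Real.sqrt (u - t)))
      = σ / Real.sqrt (2 * δ + σ ^ 2) *
        (stdCdf (Real.sqrt ((2 * δ + σ ^ 2) * (T - t))) - 1 / 2) := by
  set a : ℝ := 2 * δ + σ ^ 2 with ha_def
  have ha : 0 < a := by positivity
  have hsa : 0 < Real.sqrt a := Real.sqrt_pos.2 ha
  have hsa2 : Real.sqrt a * Real.sqrt a = a := Real.mul_self_sqrt ha.le
  set f : ℝ → ℝ := fun u => Real.exp (-δ * (u - t)) * stdPdf (σ * Real.sqrt (u - t)) *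
      (σ / (2 * Real.sqrt (u - t))) with hf_def
  set F : ℝ → ℝ := fun u => σ / Real.sqrt a * stdCdf (Real.sqrt (a * (u - t))) with hF_def
  -- derivative
  have hderiv : ∀ u ∈ Set.Ioo t T, HasDerivAt F (f u) u := by
    intro u hu
    have hv : 0 < u - t := sub_pos.2 hu.1
    have hsv : 0 < Real.sqrt (u - t) := Real.sqrt_pos.2 hv
    have hav : 0 < a * (u - t) := mul_pos ha hv
    have h1 : HasDerivAt (fun u : ℝ => a * (u - t)) (a * 1) u :=
      ((hasDerivAt_id u).sub_const t).const_mul a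
    have h2 : HasDerivAt (fun u : ℝ => Real.sqrt (a * (u - t)))
        (1 / (2 * Real.sqrt (a * (u - t))) * (a * 1)) u :=
      (Real.hasDerivAt_sqrt (ne_of_gt hav)).comp u h1
    have h3 : HasDerivAt F
        (σ / Real.sqrt a * (stdPdf (Real.sqrt (a * (u - t))) *
          (1 / (2 * Real.sqrt (a * (u - t))) * (a * 1)))) u :=
      (((hasDerivAt_stdCdf _).comp u h2).const_mul _)
    convert h3 using 1
    have hsqrt_mul : Real.sqrt (a * (u - t)) = Real.sqrt a * Real.sqrt (u - t) :=
      Real.sqrt_mul ha.le _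
    have hpdf : stdPdf (Real.sqrt (a * (u - t)))
        = Real.exp (-δ * (u - t)) * stdPdf (σ * Real.sqrt (u - t)) := by
      have hexp_eq : Real.exp (-Real.sqrt (a * (u - t)) ^ 2 / 2)
          = Real.exp (-δ * (u - t)) * Real.exp (-(σ * Real.sqrt (u - t)) ^ 2 / 2) := by
        rw [← Real.exp_add]
        congr 1
        rw [Real.sq_sqrt hav.le, mul_pow, Real.sq_sqrt hv.le]
        ring
      unfold stdPdf
      rw [hexp_eq]
      ring
    have key : σ / Real.sqrt a * (1 / (2 * (Real.sqrt a * Real.sqrt (u - t))) * (a * 1))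
        = σ / (2 * Real.sqrt (u - t)) := by
      have e1 : σ / Real.sqrt a * (1 / (2 * (Real.sqrt a * Real.sqrt (u - t))) * (a * 1))
          = a * σ / (Real.sqrt a * Real.sqrt a * (2 * Real.sqrt (u - t))) := by
        ring
      rw [e1, hsa2, mul_div_mul_left _ _ (ne_of_gt ha)]
    simp only [hf_def]
    rw [hpdf, hsqrt_mul, ← key]
    ring
  -- integrability
  have hint : IntervalIntegrable f volume t T := by
    have hg : IntervalIntegrable (fun u : ℝ => σ / (2 * Real.sqrt (2 * Real.pi)) *
        (u - t) ^ (-(1/2) : ℝ)) volume t T := by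
      have h0 : IntervalIntegrable (fun x : ℝ => x ^ (-(1/2) : ℝ)) volume 0 (T - t) :=
        intervalIntegral.intervalIntegrable_rpow' (by norm_num)
      have h1 := h0.comp_sub_right t
      have h2 := h1.const_mul (σ / (2 * Real.sqrt (2 * Real.pi)))
      simpa using h2
    refine hg.mono_fun ?_ ?_
    · -- a.e. strongly measurable
      apply ContinuousOn.aestronglyMeasurable _ measurableSet_uIoc
      rw [Set.uIoc_of_le htT.le]
      intro u hu
      have hv : 0 < u - t := sub_pos.2 hu.1
      apply ContinuousWithinAt.mul
      apply ContinuousWithinAt.mul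
      · exact (Real.continuous_exp.comp (by fun_prop)).continuousWithinAt
      · exact (continuous_stdPdf.comp (by fun_prop)).continuousWithinAt
      · apply ContinuousWithinAt.div continuousWithinAt_const
        · exact (by fun_prop : Continuous fun u : ℝ => 2 * Real.sqrt (u - t)).continuousWithinAt
        · positivity
    · rw [Set.uIoc_of_le htT.le]
      refine (ae_restrict_iff' measurableSet_Ioc).2 (Eventually.of_forall fun u hu => ?_)
      have hv : 0 < u - t := sub_pos.2 hu.1
      have hsv : 0 < Real.sqrt (u - t) := Real.sqrt_pos.2 hv
      have hsp : 0 < Real.sqrt (2 * Real.pi) := Real.sqrt_pos.2 (by positivity)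
      have hrw : (u - t) ^ (-(1/2) : ℝ) = 1 / Real.sqrt (u - t) := by
        rw [Real.rpow_neg hv.le, Real.sqrt_eq_rpow]
        simp [one_div]
      show ‖f u‖ ≤ ‖σ / (2 * Real.sqrt (2 * Real.pi)) * (u - t) ^ (-(1/2) : ℝ)‖
      have hfnn : 0 ≤ f u := by
        rw [hf_def]
        have : 0 ≤ stdPdf (σ * Real.sqrt (u - t)) := by
          unfold stdPdf; positivity
        positivity
      rw [Real.norm_eq_abs, Real.norm_eq_abs, abs_of_nonneg hfnn,
        abs_of_nonneg (by rw [hrw]; positivity), hrw, hf_def]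
      have hexp : Real.exp (-δ * (u - t)) ≤ 1 := by
        rw [Real.exp_le_one_iff]
        nlinarith
      have hpdf : stdPdf (σ * Real.sqrt (u - t)) ≤ 1 / Real.sqrt (2 * Real.pi) := by
        unfold stdPdf
        gcongr
        rw [Real.exp_le_one_iff]
        nlinarith [sq_nonneg (σ * Real.sqrt (u - t))]
      have hpdfnn : 0 ≤ stdPdf (σ * Real.sqrt (u - t)) := by unfold stdPdf; positivity
      calc Real.exp (-δ * (u - t)) * stdPdf (σ * Real.sqrt (u - t)) * (σ / (2 * Real.sqrt (u - t)))
          ≤ 1 * (1 / Real.sqrt (2 * Real.pi)) * (σ / (2 * Real.sqrt (u - t))) := by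
            apply mul_le_mul _ le_rfl (by positivity) (by positivity)
            exact mul_le_mul hexp hpdf hpdfnn zero_le_one
        _ = σ / (2 * Real.sqrt (2 * Real.pi)) * (1 / Real.sqrt (u - t)) := by
            rw [one_mul, div_mul_div_comm, div_mul_div_comm, one_mul,
              show Real.sqrt (2 * Real.pi) * (2 * Real.sqrt (u - t))
                = 2 * Real.sqrt (2 * Real.pi) * Real.sqrt (u - t) by ring, mul_one]
  -- continuity of F
  have hcont : ContinuousOn F (Set.Icc t T) := by
    apply Continuous.continuousOn
    rw [hF_def]
    exact continuous_const.mul (continuous_stdCdf.comp (by fun_prop))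
  have hFTC := intervalIntegral.integral_eq_sub_of_hasDerivAt_of_le htT.le hcont hderiv hint
  rw [hFTC, hF_def]
  simp only
  rw [show t - t = 0 by ring, mul_zero, Real.sqrt_zero, stdCdf_zero]
  ring
end

section
/- One has γ(t) > 0 for every t ∈ [0,T), and γ(t)·√(T−t) → σ/√(2π) as t → T from the left; consequently the interest rate r(t) = γ(t) + δ + σ²/2 satisfies r(t) > δ + σ²/2 on [0,T) and r(t) → +∞ as t → T−. -/
open MeasureTheory Real Set Filter

/-- `β(t) = 1 + (2σ/√(2δ+σ²))·(N(√((2δ+σ²)(T−t))) − 1/2)`. -/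
noncomputable def betaIR (T σ δ t : ℝ) : ℝ :=
  1 + 2 * σ / Real.sqrt (2 * δ + σ ^ 2) *
    (stdCdf (Real.sqrt ((2 * δ + σ ^ 2) * (T - t))) - 1 / 2)

/-- `γ(t) = σ·n(√((2δ+σ²)(T−t)))/(√(T−t)·β(t))`. -/
noncomputable def gammaIR (T σ δ t : ℝ) : ℝ :=
  σ * stdPdf (Real.sqrt ((2 * δ + σ ^ 2) * (T - t))) / (Real.sqrt (T - t) * betaIR T σ δ t)

/-- Time-dependent interest rate `r(t) = γ(t) + δ + σ²/2`. -/
noncomputable def rateIR (T σ δ t : ℝ) : ℝ := gammaIR T σ δ t + δ + σ ^ 2 / 2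

lemma integrable_gauss : Integrable (fun y : ℝ => Real.exp (-y ^ 2 / 2) / Real.sqrt (2 * Real.pi)) := by
  have h : Integrable (fun y : ℝ => Real.exp (-(1/2 : ℝ) * y ^ 2)) :=
    integrable_exp_neg_mul_sq (by norm_num)
  have := h.div_const (Real.sqrt (2 * Real.pi))
  convert this using 2 with y
  ring_nf

lemma half_le_stdCdf {x : ℝ} (hx : 0 ≤ x) : 1 / 2 ≤ stdCdf x := by
  rw [← stdCdf_zero]
  exact setIntegral_mono_set integrable_gauss.integrableOn
    (Eventually.of_forall fun y => by positivity)
    (HasSubset.Subset.eventuallyLE (Iic_subset_Iic.2 hx))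

lemma stdPdf_pos (x : ℝ) : 0 < stdPdf x :=
  div_pos (Real.exp_pos _) (Real.sqrt_pos.2 (by positivity))

theorem gammaIR_pos_and_rate_blowup (K T σ δ : ℝ)
    (hK : 0 < K) (hT : 0 < T) (hσ : 0 < σ) (hδ : 0 ≤ δ) :
    (∀ t, 0 ≤ t → t < T → 0 < gammaIR T σ δ t) ∧
    Tendsto (fun t => gammaIR T σ δ t * Real.sqrt (T - t)) (nhdsWithin T (Set.Iio T))
      (nhds (σ / Real.sqrt (2 * Real.pi))) ∧
    (∀ t, 0 ≤ t → t < T → δ + σ ^ 2 / 2 < rateIR T σ δ t) ∧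
    Tendsto (rateIR T σ δ) (nhdsWithin T (Set.Iio T)) atTop := by
  have hc : (0:ℝ) < 2 * δ + σ ^ 2 := by positivity
  -- β ≥ 1 everywhere
  have hβ : ∀ t, 1 ≤ betaIR T σ δ t := by
    intro t
    unfold betaIR
    have h1 : (0:ℝ) ≤ 2 * σ / Real.sqrt (2 * δ + σ ^ 2) := by positivity
    have h2 : (0:ℝ) ≤ stdCdf (Real.sqrt ((2 * δ + σ ^ 2) * (T - t))) - 1 / 2 := by
      have := half_le_stdCdf (Real.sqrt_nonneg ((2 * δ + σ ^ 2) * (T - t)))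
      linarith
    nlinarith
  have hβpos : ∀ t, 0 < betaIR T σ δ t := fun t => lt_of_lt_of_le one_pos (hβ t)
  have hγpos : ∀ t, t < T → 0 < gammaIR T σ δ t := by
    intro t ht
    unfold gammaIR
    exact div_pos (mul_pos hσ (stdPdf_pos _))
      (mul_pos (Real.sqrt_pos.2 (by linarith)) (hβpos t))
  -- the auxiliary function φ and its limit
  set φ : ℝ → ℝ := fun t =>
    σ * stdPdf (Real.sqrt ((2 * δ + σ ^ 2) * (T - t))) / betaIR T σ δ t with hφdef
  have harg : Tendsto (fun t => Real.sqrt ((2 * δ + σ ^ 2) * (T - t)))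
      (nhdsWithin T (Set.Iio T)) (nhds 0) := by
    have hcont : Continuous fun t : ℝ => Real.sqrt ((2 * δ + σ ^ 2) * (T - t)) := by fun_prop
    have := (hcont.tendsto T).mono_left (nhdsWithin_le_nhds (s := Set.Iio T))
    simpa using this
  have hβlim : Tendsto (fun t => betaIR T σ δ t) (nhdsWithin T (Set.Iio T)) (nhds 1) := by
    have h1 : Tendsto (fun t => stdCdf (Real.sqrt ((2 * δ + σ ^ 2) * (T - t))))
        (nhdsWithin T (Set.Iio T)) (nhds (stdCdf 0)) :=
      (continuous_stdCdf.tendsto 0).comp harg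
    have : Tendsto (fun t => betaIR T σ δ t) (nhdsWithin T (Set.Iio T))
        (nhds (1 + 2 * σ / Real.sqrt (2 * δ + σ ^ 2) * (stdCdf 0 - 1 / 2))) := by
      unfold betaIR
      exact tendsto_const_nhds.add (tendsto_const_nhds.mul (h1.sub tendsto_const_nhds))
    simpa [stdCdf_zero] using this
  have hpdf0 : stdPdf 0 = 1 / Real.sqrt (2 * Real.pi) := by
    unfold stdPdf
    norm_num
  have hφlim : Tendsto φ (nhdsWithin T (Set.Iio T)) (nhds (σ / Real.sqrt (2 * Real.pi))) := by
    have hn : Tendsto (fun t => σ * stdPdf (Real.sqrt ((2 * δ + σ ^ 2) * (T - t))))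
        (nhdsWithin T (Set.Iio T)) (nhds (σ * stdPdf 0)) :=
      tendsto_const_nhds.mul ((continuous_stdPdf.tendsto 0).comp harg)
    have h2 := hn.div hβlim one_ne_zero
    have heq : σ * stdPdf 0 / 1 = σ / Real.sqrt (2 * Real.pi) := by
      rw [hpdf0]; ring
    rw [heq] at h2
    exact h2
  -- part 2
  have hpart2 : Tendsto (fun t => gammaIR T σ δ t * Real.sqrt (T - t))
      (nhdsWithin T (Set.Iio T)) (nhds (σ / Real.sqrt (2 * Real.pi))) := by
    refine hφlim.congr' ?_
    filter_upwards [eventually_mem_nhdsWithin] with t (ht : t < T)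
    have hs : Real.sqrt (T - t) ≠ 0 := (Real.sqrt_pos.2 (by linarith)).ne'
    have hb : betaIR T σ δ t ≠ 0 := (hβpos t).ne'
    unfold gammaIR
    rw [hφdef, mul_comm (Real.sqrt (T - t)), div_mul_eq_mul_div, mul_div_mul_right _ _ hs]
  -- γ as φ times inverse sqrt
  have hγeq : ∀ t, gammaIR T σ δ t = φ t * (Real.sqrt (T - t))⁻¹ := by
    intro t
    unfold gammaIR
    rw [hφdef, mul_comm (Real.sqrt (T - t)), ← div_div, div_eq_mul_inv]
  have hinv : Tendsto (fun t => (Real.sqrt (T - t))⁻¹) (nhdsWithin T (Set.Iio T)) atTop := by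
    apply tendsto_inv_nhdsGT_zero.comp
    rw [tendsto_nhdsWithin_iff]
    constructor
    · have hcont : Continuous fun t : ℝ => Real.sqrt (T - t) := by fun_prop
      have := (hcont.tendsto T).mono_left (nhdsWithin_le_nhds (s := Set.Iio T))
      simpa using this
    · filter_upwards [eventually_mem_nhdsWithin] with t (ht : t < T)
      exact Real.sqrt_pos.2 (by linarith)
  have hγtop : Tendsto (gammaIR T σ δ) (nhdsWithin T (Set.Iio T)) atTop := by
    have hLpos : 0 < σ / Real.sqrt (2 * Real.pi) := by positivity
    have := hφlim.pos_mul_atTop hLpos hinv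
    exact this.congr fun t => (hγeq t).symm
  refine ⟨fun t _ ht => hγpos t ht, hpart2, fun t _ ht => ?_, ?_⟩
  · have := hγpos t ht
    unfold rateIR
    linarith
  · have : rateIR T σ δ = fun t => gammaIR T σ δ t + δ + σ ^ 2 / 2 := rfl
    rw [this]
    exact tendsto_atTop_add_const_right _ _ (tendsto_atTop_add_const_right _ _ hγtop)
end
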